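/- arXiv:0803.2639 — 2 statements merged into one kernel-verified Lean document; each statement's English description precedes it below -/
import Mathlib

section
/- An element q = c₁ + ξc₂ + jc₃ + jξc₄ of H (with c₁,…,c₄ ∈ Q(i)) belongs to the Hurwitz-type ring 𝓗 if and only if (1+i)cₜ ∈ ℤ[i] for all t = 1,2,3,4 and c₁+c₃ ∈ ℤ[i] and c₂+c₄ ∈ ℤ[i]. -/
open Quaternion Complex

noncomputable def toQ (z : ℂ) : Quaternion ℝ := ⟨z.re, z.im, 0, 0⟩
def jj : Quaternion ℝ := ⟨0, 0, 1, 0⟩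
noncomputable def xiC : ℂ := Complex.exp (Real.pi * Complex.I / 4)
noncomputable def xiQ : Quaternion ℝ := toQ xiC
def Gq (a b : ℤ) : Quaternion ℝ := ⟨(a : ℝ), (b : ℝ), 0, 0⟩
noncomputable def rhoQ : Quaternion ℝ := ⟨1/2, 1/2, 1/2, 1/2⟩

/-- `z` is a Gaussian integer. -/
def IsGaussian (z : ℂ) : Prop := ∃ a b : ℤ, z = a + b * Complex.I

/-- `z` belongs to `ℚ(i)`. -/
def InQi (z : ℂ) : Prop := ∃ a b : ℚ, z = a + b * Complex.I

/-- The Hurwitz-type ring `𝓗 = ρℤ[i] ⊕ ρξℤ[i] ⊕ jℤ[i] ⊕ jξℤ[i]`. -/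
noncomputable def HurSet : Set (Quaternion ℝ) :=
  {q | ∃ a₁ b₁ a₂ b₂ a₃ b₃ a₄ b₄ : ℤ,
    q = rhoQ * Gq a₁ b₁ + rhoQ * xiQ * Gq a₂ b₂ + jj * Gq a₃ b₃ + jj * xiQ * Gq a₄ b₄}

/-!
Since `ρ = (1 + i)/2 + j (1 - i)/2` and complex numbers commute with `ξ`, the element
`ρ g₁ + ρ ξ g₂ + j g₃ + j ξ g₄` of `𝓗` has coordinates `c₁ = (1 + i) g₁ / 2`,
`c₃ = (1 - i) g₁ / 2 + g₃`, and likewise `c₂, c₄` from `g₂, g₄`. These coordinates are unique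
on `H`: `1, j` are independent over `ℂ`, and `1, ξ` over `ℚ(i)` because `Re ξ = Im ξ = √2/2` is
irrational. Finally, `(c₁, c₃)` has this shape exactly when `(1 + i) c₁`, `(1 + i) c₃` and
`c₁ + c₃` are Gaussian integers, with `g₁ = (1 - i) c₁` and `g₃ = c₃ + i c₁`.
-/

lemma Irrational.eq_zero_of_ratCast_add_mul_eq_zero {s : ℝ} (hs : Irrational s) {p r : ℚ}
    (h : (p : ℝ) + s * r = 0) : r = 0 := by
  by_contra hr
  exact ((hs.mul_ratCast hr).ratCast_add p).ne_zero h

lemma xiC_eq : xiC = (√2 / 2 : ℝ) * (1 + I) := by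
  have : xiC = exp ((Real.pi / 4 : ℝ) * I) := by
    rw [xiC]; push_cast; ring_nf
  rw [this, exp_mul_I, ← ofReal_cos, ← ofReal_sin, Real.cos_pi_div_four, Real.sin_pi_div_four]
  ring

lemma InQi.sub {z w : ℂ} (hz : InQi z) (hw : InQi w) : InQi (z - w) := by
  obtain ⟨a, b, rfl⟩ := hz
  obtain ⟨c, d, rfl⟩ := hw
  exact ⟨a - c, b - d, by push_cast; ring⟩

lemma InQi.of_isGaussian_two_mul {z : ℂ} (h : IsGaussian (2 * z)) : InQi z := by
  obtain ⟨a, b, h⟩ := h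
  exact ⟨a / 2, b / 2, by push_cast; linear_combination h / 2⟩

lemma eq_zero_of_inQi_of_add_xiC_mul_eq_zero {a b : ℂ} (ha : InQi a) (hb : InQi b)
    (h : a + xiC * b = 0) : b = 0 := by
  obtain ⟨p, q, rfl⟩ := ha
  obtain ⟨u, v, rfl⟩ := hb
  have hs : Irrational (√2 / 2) := irrational_sqrt_two.div_natCast two_ne_zero
  have hre := congrArg re h
  have him := congrArg im h
  simp only [xiC_eq, ofReal_div, ofReal_ofNat, add_re, ratCast_re, mul_re, I_re, mul_zero,
    ratCast_im, I_im, mul_one, sub_self, add_zero, div_ofNat_re, ofReal_re, one_re, div_ofNat_im,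
    ofReal_im, zero_div, add_im, one_im, zero_add, sub_zero, mul_im, zero_re, zero_im] at hre him
  have h₁ : u - v = 0 := hs.eq_zero_of_ratCast_add_mul_eq_zero (p := p) (by push_cast; linarith)
  have h₂ : u + v = 0 := hs.eq_zero_of_ratCast_add_mul_eq_zero (p := q) (by push_cast; linarith)
  obtain ⟨rfl, rfl⟩ : u = 0 ∧ v = 0 := ⟨by linarith, by linarith⟩
  simp

lemma eq_and_eq_of_inQi_of_add_xiC_mul_eq {z w z' w' : ℂ} (hz : InQi z) (hw : InQi w)
    (hz' : InQi z') (hw' : InQi w') (h : z + xiC * w = z' + xiC * w') : z = z' ∧ w = w' := by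
  have hdiff : w - w' = 0 :=
    eq_zero_of_inQi_of_add_xiC_mul_eq_zero (hz.sub hz') (hw.sub hw') (by linear_combination h)
  refine ⟨?_, sub_eq_zero.1 hdiff⟩
  linear_combination h - xiC * hdiff

lemma toQ_eq_ofComplex (z : ℂ) : toQ z = ofComplex z := rfl

lemma toQ_add_jj_mul_toQ_inj {z w z' w' : ℂ} :
    toQ z + jj * toQ w = toQ z' + jj * toQ w' ↔ z = z' ∧ w = w' := by
  simp only [Quaternion.ext_iff, Quaternion.re_add, Quaternion.imI_add, Quaternion.imJ_add,
    Quaternion.imK_add, Quaternion.re_mul, Quaternion.imI_mul, Quaternion.imJ_mul, Quaternion.imK_mul]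
  simp [toQ, jj, Complex.ext_iff, and_assoc]

/-- The quaternion `c₁ + ξ c₂ + j c₃ + j ξ c₄`. -/
noncomputable def quatOf (c₁ c₂ c₃ c₄ : ℂ) : Quaternion ℝ :=
  toQ (c₁ + xiC * c₂) + jj * toQ (c₃ + xiC * c₄)

lemma toQ_add_xiQ_mul_toQ_add_eq_quatOf (c₁ c₂ c₃ c₄ : ℂ) :
    toQ c₁ + xiQ * toQ c₂ + jj * toQ c₃ + jj * xiQ * toQ c₄ = quatOf c₁ c₂ c₃ c₄ := by
  simp only [quatOf, xiQ, toQ_eq_ofComplex, map_add, map_mul]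
  noncomm_ring

lemma quatOf_inj {c₁ c₂ c₃ c₄ c₁' c₂' c₃' c₄' : ℂ} (h₁ : InQi c₁) (h₂ : InQi c₂) (h₃ : InQi c₃)
    (h₄ : InQi c₄) (h₁' : InQi c₁') (h₂' : InQi c₂') (h₃' : InQi c₃') (h₄' : InQi c₄') :
    quatOf c₁ c₂ c₃ c₄ = quatOf c₁' c₂' c₃' c₄' ↔ c₁ = c₁' ∧ c₂ = c₂' ∧ c₃ = c₃' ∧ c₄ = c₄' := by
  refine ⟨fun h ↦ ?_, by rintro ⟨rfl, rfl, rfl, rfl⟩; rfl⟩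
  obtain ⟨h₁₂, h₃₄⟩ := toQ_add_jj_mul_toQ_inj.1 h
  obtain ⟨rfl, rfl⟩ := eq_and_eq_of_inQi_of_add_xiC_mul_eq h₁ h₂ h₁' h₂' h₁₂
  obtain ⟨rfl, rfl⟩ := eq_and_eq_of_inQi_of_add_xiC_mul_eq h₃ h₄ h₃' h₄' h₃₄
  exact ⟨rfl, rfl, rfl, rfl⟩

lemma Gq_eq (a b : ℤ) : Gq a b = toQ (a + b * I) := by
  ext <;> simp [Gq, toQ]

lemma rhoQ_eq : rhoQ = toQ ((1 + I) / 2) + jj * toQ ((1 - I) / 2) := by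
  ext <;> simp only [Quaternion.re_add, Quaternion.imI_add, Quaternion.imJ_add, Quaternion.imK_add,
    Quaternion.re_mul, Quaternion.imI_mul, Quaternion.imJ_mul, Quaternion.imK_mul] <;>
    norm_num [rhoQ, toQ, jj]

lemma rhoQ_mul_add_eq_quatOf (g₁ g₂ g₃ g₄ : ℂ) :
    rhoQ * toQ g₁ + rhoQ * xiQ * toQ g₂ + jj * toQ g₃ + jj * xiQ * toQ g₄ =
      quatOf ((1 + I) / 2 * g₁) ((1 + I) / 2 * g₂) ((1 - I) / 2 * g₁ + g₃)
        ((1 - I) / 2 * g₂ + g₄) := by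
  rw [rhoQ_eq, quatOf, mul_left_comm xiC, mul_add xiC, mul_left_comm xiC]
  simp only [xiQ, toQ_eq_ofComplex, map_add, map_mul]
  noncomm_ring

lemma isGaussian_iff_mem_range (z : ℂ) : IsGaussian z ↔ z ∈ GaussianInt.toComplex.range := by
  constructor
  · rintro ⟨a, b, rfl⟩
    exact ⟨⟨a, b⟩, GaussianInt.toComplex_def' a b⟩
  · rintro ⟨x, rfl⟩
    exact ⟨x.re, x.im, GaussianInt.toComplex_def x⟩

lemma I_mem_range_toComplex : I ∈ GaussianInt.toComplex.range :=
  ⟨⟨0, 1⟩, by simp [GaussianInt.toComplex_def']⟩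

/-- `(a, b)` are the `1`- and `j`-coordinates of `ρ g + j g'` for Gaussian integers `g, g'`. -/
def IsHurwitzPair (a b : ℂ) : Prop :=
  ∃ g g', IsGaussian g ∧ IsGaussian g' ∧ a = (1 + I) / 2 * g ∧ b = (1 - I) / 2 * g + g'

lemma IsHurwitzPair.inQi {a b : ℂ} (h : IsHurwitzPair a b) : InQi a ∧ InQi b := by
  obtain ⟨g, g', hg, hg', rfl, rfl⟩ := h
  rw [isGaussian_iff_mem_range] at hg hg'
  refine ⟨.of_isGaussian_two_mul ?_, .of_isGaussian_two_mul ?_⟩ <;> rw [isGaussian_iff_mem_range]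
  · rw [show 2 * ((1 + I) / 2 * g) = (1 + I) * g by ring]
    exact mul_mem (add_mem (one_mem _) I_mem_range_toComplex) hg
  · rw [show 2 * ((1 - I) / 2 * g + g') = (1 - I) * g + (g' + g') by ring]
    exact add_mem (mul_mem (sub_mem (one_mem _) I_mem_range_toComplex) hg) (add_mem hg' hg')

lemma isHurwitzPair_iff {a b : ℂ} : IsHurwitzPair a b ↔
    IsGaussian ((1 + I) * a) ∧ IsGaussian ((1 + I) * b) ∧ IsGaussian (a + b) := by
  simp only [IsHurwitzPair, isGaussian_iff_mem_range]
  have hI := I_mem_range_toComplex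
  constructor
  · rintro ⟨g, g', hg, hg', rfl, rfl⟩
    refine ⟨?_, ?_, ?_⟩
    · rw [show (1 + I) * ((1 + I) / 2 * g) = I * g by linear_combination g / 2 * I_sq]
      exact mul_mem hI hg
    · rw [show (1 + I) * ((1 - I) / 2 * g + g') = g + (1 + I) * g' by
        linear_combination -g / 2 * I_sq]
      exact add_mem hg (mul_mem (add_mem (one_mem _) hI) hg')
    · rw [show (1 + I) / 2 * g + ((1 - I) / 2 * g + g') = g + g' by ring]
      exact add_mem hg hg'
  · rintro ⟨ha, -, hab⟩
    refine ⟨-I * ((1 + I) * a), a + b + I * ((1 + I) * a), mul_mem (neg_mem hI) ha,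
      add_mem hab (mul_mem hI ha), ?_, ?_⟩
    · linear_combination (a + I * a / 2) * I_sq
    · linear_combination -(a + I * a / 2) * I_sq

lemma mem_hurSet_iff {q : Quaternion ℝ} : q ∈ HurSet ↔
    ∃ c₁ c₂ c₃ c₄, IsHurwitzPair c₁ c₃ ∧ IsHurwitzPair c₂ c₄ ∧ q = quatOf c₁ c₂ c₃ c₄ := by
  constructor
  · rintro ⟨a₁, b₁, a₂, b₂, a₃, b₃, a₄, b₄, rfl⟩
    simp only [Gq_eq, rhoQ_mul_add_eq_quatOf]
    exact ⟨_, _, _, _, ⟨_, _, ⟨a₁, b₁, rfl⟩, ⟨a₃, b₃, rfl⟩, rfl, rfl⟩,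
      ⟨_, _, ⟨a₂, b₂, rfl⟩, ⟨a₄, b₄, rfl⟩, rfl, rfl⟩, rfl⟩
  · rintro ⟨_, _, _, _, ⟨_, _, ⟨a₁, b₁, rfl⟩, ⟨a₃, b₃, rfl⟩, rfl, rfl⟩,
      ⟨_, _, ⟨a₂, b₂, rfl⟩, ⟨a₄, b₄, rfl⟩, rfl, rfl⟩, rfl⟩
    exact ⟨a₁, b₁, a₂, b₂, a₃, b₃, a₄, b₄, by simp only [Gq_eq, rhoQ_mul_add_eq_quatOf]⟩

lemma quatOf_mem_hurSet_iff {c₁ c₂ c₃ c₄ : ℂ} (h₁ : InQi c₁) (h₂ : InQi c₂) (h₃ : InQi c₃)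
    (h₄ : InQi c₄) : quatOf c₁ c₂ c₃ c₄ ∈ HurSet ↔ IsHurwitzPair c₁ c₃ ∧ IsHurwitzPair c₂ c₄ := by
  rw [mem_hurSet_iff]
  constructor
  · rintro ⟨c₁', c₂', c₃', c₄', h₁₃, h₂₄, h⟩
    obtain ⟨h₁', h₃'⟩ := h₁₃.inQi
    obtain ⟨h₂', h₄'⟩ := h₂₄.inQi
    obtain ⟨rfl, rfl, rfl, rfl⟩ := (quatOf_inj h₁ h₂ h₃ h₄ h₁' h₂' h₃' h₄').1 h
    exact ⟨h₁₃, h₂₄⟩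
  · rintro ⟨h₁₃, h₂₄⟩
    exact ⟨_, _, _, _, h₁₃, h₂₄, rfl⟩

/-- An element `q = c₁ + ξc₂ + jc₃ + jξc₄` of `H` (with `cₜ ∈ ℚ(i)`) belongs to
the Hurwitz-type ring `𝓗` iff `(1+i)cₜ ∈ ℤ[i]` for all `t`, `c₁+c₃ ∈ ℤ[i]` and
`c₂+c₄ ∈ ℤ[i]`. -/
theorem stmt3 (c₁ c₂ c₃ c₄ : ℂ)
    (h₁ : InQi c₁) (h₂ : InQi c₂) (h₃ : InQi c₃) (h₄ : InQi c₄) :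
    (toQ c₁ + xiQ * toQ c₂ + jj * toQ c₃ + jj * xiQ * toQ c₄) ∈ HurSet ↔
      (IsGaussian ((1 + Complex.I) * c₁) ∧ IsGaussian ((1 + Complex.I) * c₂) ∧
       IsGaussian ((1 + Complex.I) * c₃) ∧ IsGaussian ((1 + Complex.I) * c₄)) ∧
      IsGaussian (c₁ + c₃) ∧ IsGaussian (c₂ + c₄) := by
  rw [toQ_add_xiQ_mul_toQ_add_eq_quatOf, quatOf_mem_hurSet_iff h₁ h₂ h₃ h₄, isHurwitzPair_iff,
    isHurwitzPair_iff]
  tauto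
end

section
/- The diamond lattice E₈ realized inside the quaternion order, namely E₈ = (1/(1+i)){(c₁,c₂,c₃,c₄) ∈ ℤ[i]⁴ : c₁ ≡ cₜ mod (1+i) for t=2,3,4, and Σcₜ ∈ 2ℤ[i]} (identified with quaternions c₁ + ξc₂ + jc₃ + jξc₄), equals the left ideal 𝓗(1+ξ) of the Hurwitz-type order 𝓗 generated by 1+ξ. -/
/-!
Inside `ℍ = ℂ ⊕ jℂ` one has `ρ = (1 + i)/2 + j(1 - i)/2` and `ξ² = i`, so for
`h = ρ(g₀ + ξg₁) + j(g₂ + ξg₃)` the product `h(1 + ξ)` is the quaternion attached to the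
coordinates
  `c = (ig₀ - g₁, i(g₀ + g₁), g₀ + ig₁ + (1 + i)(g₂ + ig₃), g₀ + g₁ + (1 + i)(g₂ + g₃))`.
The theorem thus becomes a statement about this `ℤ[i]`-linear map: its image is exactly the
set of `c` with `c₀ ≡ cₜ mod (1 + i)` and `2 ∣ Σ cₜ`. One inclusion is a direct check; for the
other one solves for `g` triangularly, and the parity condition is precisely what makes the
last coordinate `g₃` integral.
-/

open Quaternion Complex

def InIdeal (z : ℂ) : Prop := ∃ a b : ℤ, z = (1 + Complex.I) * (a + b * Complex.I)

/-- The `E₈` lattice realized inside the quaternion algebra: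
`(1/(1+i)){(c₁,c₂,c₃,c₄) ∈ ℤ[i]⁴ : c₁ ≡ cₜ mod (1+i), Σcₜ ∈ 2ℤ[i]}` under the
identification with quaternions `c₁ + ξc₂ + jc₃ + jξc₄`. -/
noncomputable def E8set : Set (Quaternion ℝ) :=
  {q | ∃ c : Fin 4 → ℂ, (∀ t, IsGaussian (c t)) ∧
    (∀ t, InIdeal (c 0 - c t)) ∧
    (∃ a b : ℤ, c 0 + c 1 + c 2 + c 3 = 2 * (a + b * Complex.I)) ∧
    q = toQ (c 0 / (1 + Complex.I)) + xiQ * toQ (c 1 / (1 + Complex.I)) +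
        jj * toQ (c 2 / (1 + Complex.I)) + jj * xiQ * toQ (c 3 / (1 + Complex.I))}

open GaussianInt

def e8OfHurwitz {R : Type*} [CommRing R] (i : R) (g : Fin 4 → R) : Fin 4 → R :=
  ![i * g 0 - g 1, i * (g 0 + g 1), g 0 + i * g 1 + (1 + i) * (g 2 + i * g 3),
    g 0 + g 1 + (1 + i) * (g 2 + g 3)]

def IsE8Coords {R : Type*} [CommRing R] (i : R) (c : Fin 4 → R) : Prop :=
  (∀ t, 1 + i ∣ c 0 - c t) ∧ 2 ∣ c 0 + c 1 + c 2 + c 3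

section
variable {R : Type*} [CommRing R] {i : R}

lemma isE8Coords_e8OfHurwitz (hi : i * i = -1) (g : Fin 4 → R) :
    IsE8Coords i (e8OfHurwitz i g) := by
  refine ⟨fun t => ?_, ⟨(1 + i) * g 0 + i * g 1 + (1 + i) * g 2 + i * g 3, ?_⟩⟩
  · fin_cases t
    · simp
    · exact ⟨-g 1, by simp only [e8OfHurwitz, Fin.mk_one, Matrix.cons_val]; ring⟩
    · exact ⟨i * g 0 - g 1 - g 2 - i * g 3, by
        simp only [e8OfHurwitz, Fin.reduceFinMk, Matrix.cons_val]
        linear_combination (-g 0) * hi⟩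
    · exact ⟨i * g 0 - (1 - i) * g 1 - g 2 - g 3, by
        simp only [e8OfHurwitz, Fin.reduceFinMk, Matrix.cons_val]
        linear_combination (-g 0 - g 1) * hi⟩
  · simp only [e8OfHurwitz, Matrix.cons_val]; linear_combination g 3 * hi

lemma IsE8Coords.exists_e8OfHurwitz_eq [IsDomain R] (hi : i * i = -1) (h1i : 1 + i ≠ 0)
    {c : Fin 4 → R} (hc : IsE8Coords i c) : ∃ g, e8OfHurwitz i g = c := by
  obtain ⟨hdvd, s, hs⟩ := hc
  obtain ⟨d₁, hd₁⟩ := hdvd 1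
  obtain ⟨d₂, hd₂⟩ := hdvd 2
  obtain ⟨d₃, hd₃⟩ := hdvd 3
  -- `(1 + i)(d₁ + d₂ + d₃) = 4c₀ - 2s = (1 + i)² · i(s - 2c₀)`, and `1 + i` cancels
  obtain ⟨k, hk⟩ : 1 + i ∣ d₁ + d₂ + d₃ :=
    ⟨i * (s - 2 * c 0), mul_left_cancel₀ h1i <| by
      linear_combination -hd₁ - hd₂ - hd₃ - hs - (2 + i) * (s - 2 * c 0) * hi⟩
  refine ⟨![-i * c 0 + i * d₁, -d₁, c 0 - d₃ - i * d₁ + i * k - (1 + i) * d₂ - d₁,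
    -i * k + (1 + i) * d₂ + d₁], ?_⟩
  ext t
  fin_cases t <;> simp only [e8OfHurwitz, Fin.mk_one, Fin.reduceFinMk, Matrix.cons_val]
  · linear_combination (d₁ - c 0) * hi
  · linear_combination (d₁ - c 0) * hi + hd₁
  · linear_combination hd₂ - (1 + i) * hk + (1 + i) * (d₂ - k) * hi
  · linear_combination -d₁ * hi + hd₃
end

lemma toQ_add (z w : ℂ) : toQ (z + w) = toQ z + toQ w := by
  ext <;> simp only [re_add, imI_add, imJ_add, imK_add] <;> simp [toQ]

lemma toQ_mul (z w : ℂ) : toQ (z * w) = toQ z * toQ w := by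
  ext <;> simp only [re_mul, imI_mul, imJ_mul, imK_mul] <;> simp [toQ]

lemma toQ_one : toQ 1 = 1 := by
  ext <;> simp [toQ]

lemma rhoQ_mul_toQ (z : ℂ) :
    rhoQ * toQ z = toQ ((1 + I) / 2 * z) + jj * toQ ((1 - I) / 2 * z) := by
  ext <;> simp only [re_add, imI_add, imJ_add, imK_add, re_mul, imI_mul, imJ_mul, imK_mul] <;>
    simp [rhoQ, toQ, jj] <;> ring

lemma xiC_sq : xiC ^ 2 = I := by
  rw [xiC, sq, ← Complex.exp_add]
  convert Complex.exp_pi_div_two_mul_I using 2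
  ring

noncomputable def hurwitzPoint (g : Fin 4 → ℂ) : ℍ[ℝ] :=
  rhoQ * toQ (g 0) + rhoQ * xiQ * toQ (g 1) + jj * toQ (g 2) + jj * xiQ * toQ (g 3)

noncomputable def e8Point (c : Fin 4 → ℂ) : ℍ[ℝ] :=
  toQ (c 0 / (1 + I)) + xiQ * toQ (c 1 / (1 + I)) + jj * toQ (c 2 / (1 + I)) +
    jj * xiQ * toQ (c 3 / (1 + I))

lemma hurwitzPoint_eq (g : Fin 4 → ℂ) :
    hurwitzPoint g = rhoQ * toQ (g 0 + xiC * g 1) + jj * toQ (g 2 + xiC * g 3) := by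
  simp only [hurwitzPoint, xiQ, toQ_add, toQ_mul]
  noncomm_ring

lemma e8Point_eq (c : Fin 4 → ℂ) :
    e8Point c = toQ ((c 0 + xiC * c 1) / (1 + I)) + jj * toQ ((c 2 + xiC * c 3) / (1 + I)) := by
  simp only [e8Point, xiQ, add_div, mul_div_assoc, toQ_add, toQ_mul]
  noncomm_ring

lemma hurwitzPoint_mul_one_add_xiQ (g : Fin 4 → ℂ) :
    hurwitzPoint g * (1 + xiQ) = e8Point (e8OfHurwitz I g) := by
  set u := (g 0 + xiC * g 1) * (1 + xiC)
  set v := (g 2 + xiC * g 3) * (1 + xiC)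
  have hu : I * g 0 - g 1 + xiC * (I * (g 0 + g 1)) = I * u := by
    linear_combination (-I * g 1) * xiC_sq - g 1 * I_sq
  have hv : g 0 + I * g 1 + (1 + I) * (g 2 + I * g 3) +
      xiC * (g 0 + g 1 + (1 + I) * (g 2 + g 3)) = u + (1 + I) * v := by
    linear_combination (-(g 1 + (1 + I) * g 3)) * xiC_sq
  calc hurwitzPoint g * (1 + xiQ)
      = rhoQ * toQ u + jj * toQ v := by
        simp only [hurwitzPoint_eq, xiQ, u, v, toQ_mul, toQ_add, toQ_one]; noncomm_ring
    _ = toQ ((1 + I) / 2 * u) + jj * toQ ((1 - I) / 2 * u + v) := by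
        rw [rhoQ_mul_toQ, toQ_add (_ * u), mul_add]; abel
    _ = e8Point (e8OfHurwitz I g) := by
        have h1I : 1 + I ≠ 0 := by simp [Complex.ext_iff]
        have hρ : (1 + I) / 2 * u = I * u / (1 + I) := by
          field_simp; linear_combination u * I_sq
        have hρ' : (1 - I) / 2 * u + v = (u + (1 + I) * v) / (1 + I) := by
          field_simp; linear_combination -u * I_sq
        rw [hρ, hρ', e8Point_eq, ← hu, ← hv]; rfl

lemma map_e8OfHurwitz {R S : Type*} [CommRing R] [CommRing S] (f : R →+* S) (i : R)
    (g : Fin 4 → R) :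
    (fun t => f (e8OfHurwitz i g t)) = e8OfHurwitz (f i) (fun t => f (g t)) := by
  ext t
  fin_cases t <;> simp [e8OfHurwitz]

lemma GaussianInt.toComplex_sqrtd : ((Zsqrtd.sqrtd : GaussianInt) : ℂ) = I := by
  simp [toComplex_def]

lemma isGaussian_iff {z : ℂ} : IsGaussian z ↔ ∃ x : GaussianInt, (x : ℂ) = z := by
  constructor
  · rintro ⟨a, b, rfl⟩
    exact ⟨⟨a, b⟩, toComplex_def' a b⟩
  · rintro ⟨x, rfl⟩
    exact ⟨x.re, x.im, toComplex_def x⟩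

lemma GaussianInt.dvd_iff_exists_int {x y : GaussianInt} :
    y ∣ x ↔ ∃ a b : ℤ, (x : ℂ) = y * (a + b * I) := by
  constructor
  · rintro ⟨w, rfl⟩
    exact ⟨w.re, w.im, by rw [map_mul, toComplex_def w]⟩
  · rintro ⟨a, b, h⟩
    exact ⟨⟨a, b⟩, toComplex_injective (by rw [map_mul, h, toComplex_def' a b])⟩

lemma inIdeal_toComplex_iff (x : GaussianInt) : InIdeal x ↔ 1 + Zsqrtd.sqrtd ∣ x := by
  rw [dvd_iff_exists_int, map_add, map_one, toComplex_sqrtd]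
  rfl

lemma mem_E8set_iff {q : ℍ[ℝ]} :
    q ∈ E8set ↔
      ∃ c : Fin 4 → GaussianInt, IsE8Coords Zsqrtd.sqrtd c ∧ q = e8Point (fun t => c t) := by
  constructor
  · rintro ⟨c, hG, hI, hs, rfl⟩
    choose c' hc' using fun t => isGaussian_iff.1 (hG t)
    obtain rfl : (fun t => (c' t : ℂ)) = c := funext hc'
    refine ⟨c', ⟨fun t => ?_, ?_⟩, rfl⟩
    · rw [← inIdeal_toComplex_iff, map_sub]
      exact hI t
    · rw [dvd_iff_exists_int]
      simpa [map_ofNat] using hs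
  · rintro ⟨c, ⟨hI, hs⟩, rfl⟩
    refine ⟨fun t => c t, fun t => isGaussian_iff.2 ⟨c t, rfl⟩, fun t => ?_, ?_, rfl⟩
    · rw [← map_sub, inIdeal_toComplex_iff]
      exact hI t
    · simpa [map_ofNat] using dvd_iff_exists_int.1 hs

lemma Gq_eq_toQ (a b : ℤ) : Gq a b = toQ (⟨a, b⟩ : GaussianInt) := by
  ext <;> simp [Gq, toQ, toComplex_def']

lemma hurSet_eq_range :
    HurSet = Set.range (fun g : Fin 4 → GaussianInt => hurwitzPoint (fun t => g t)) := by
  ext q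
  constructor
  · rintro ⟨a₁, b₁, a₂, b₂, a₃, b₃, a₄, b₄, rfl⟩
    refine ⟨![⟨a₁, b₁⟩, ⟨a₂, b₂⟩, ⟨a₃, b₃⟩, ⟨a₄, b₄⟩], ?_⟩
    simp only [hurwitzPoint, Gq_eq_toQ]
    rfl
  · rintro ⟨g, rfl⟩
    exact ⟨(g 0).re, (g 0).im, (g 1).re, (g 1).im, (g 2).re, (g 2).im, (g 3).re, (g 3).im,
      by simp only [hurwitzPoint, Gq_eq_toQ]⟩

/-- The diamond lattice `E₈` equals the left ideal `𝓗(1+ξ)` of the Hurwitz-type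
order `𝓗` generated by `1 + ξ`. -/
theorem stmt13 : E8set = (fun h => h * (1 + xiQ)) '' HurSet := by
  have hi : (Zsqrtd.sqrtd : GaussianInt) * Zsqrtd.sqrtd = -1 := by simp
  have h1i : (1 + Zsqrtd.sqrtd : GaussianInt) ≠ 0 := by simp [Zsqrtd.ext_iff]
  have hmul (g : Fin 4 → GaussianInt) : hurwitzPoint (fun t => g t) * (1 + xiQ) =
      e8Point (fun t => ((e8OfHurwitz Zsqrtd.sqrtd g t : GaussianInt) : ℂ)) := by
    rw [hurwitzPoint_mul_one_add_xiQ, ← toComplex_sqrtd, ← map_e8OfHurwitz]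
  ext q
  rw [mem_E8set_iff, hurSet_eq_range, ← Set.range_comp, Set.mem_range]
  constructor
  · rintro ⟨c, hc, rfl⟩
    obtain ⟨g, rfl⟩ := hc.exists_e8OfHurwitz_eq hi h1i
    exact ⟨g, hmul g⟩
  · rintro ⟨g, rfl⟩
    exact ⟨e8OfHurwitz Zsqrtd.sqrtd g, isE8Coords_e8OfHurwitz hi g, hmul g⟩
end
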